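/- Let F : ℕ → ℕ be a finitely supported function (F k is the number of overlaps with exactly k sides on the n-gon) and let F_total = ∑ k, F k. If 3 * F 0 + F 1 ≤ m and ∑ k, k * F k ≤ n * (m / 2) (integer division), then 2 * F_total ≤ n * (m / 2) + m. -/
import Mathlib


/-- Key counting inequality in the upper-bound proof of Theorem 3:
adding `3F₀ + F₁ ≤ m` to `∑ k·F k ≤ n·⌊m/2⌋` gives `2·∑ F k ≤ n·⌊m/2⌋ + m`. -/
theorem overlap_count_upper_bound (m n : ℕ) (F : ℕ →₀ ℕ)
    (h1 : 3 * F 0 + F 1 ≤ m)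
    (h2 : F.sum (fun k v => k * v) ≤ n * (m / 2)) :
    2 * F.sum (fun _ v => v) ≤ n * (m / 2) + m := by
  classical
  set g : ℕ → ℕ := fun k => if k = 0 then 3 * F k else if k = 1 then F k else 0 with hg
  have key : ∀ k ∈ F.support, 2 * F k ≤ k * F k + g k := by
    intro k _
    rcases k with _ | _ | k
    · simp [hg]; omega
    · simp [hg]; omega
    · simp [hg]; nlinarith [F (k+2)]
  have h3 : ∑ k ∈ F.support, g k ≤ 3 * F 0 + F 1 := by
    have hsub : ∑ k ∈ F.support, g k = ∑ k ∈ F.support.filter (fun k => k ≤ 1), g k := by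
      rw [Finset.sum_filter_of_ne]
      intro k _ hk
      simp only [hg] at hk
      rcases k with _ | _ | k <;> simp_all
    rw [hsub]
    have : F.support.filter (fun k => k ≤ 1) ⊆ ({0, 1} : Finset ℕ) := by
      intro k hk
      simp only [Finset.mem_filter] at hk
      rcases hk with ⟨_, hk⟩
      interval_cases k <;> simp
    calc ∑ k ∈ F.support.filter (fun k => k ≤ 1), g k
        ≤ ∑ k ∈ ({0, 1} : Finset ℕ), g k := Finset.sum_le_sum_of_subset this
      _ = 3 * F 0 + F 1 := by simp [hg]
  calc 2 * F.sum (fun _ v => v)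
      = ∑ k ∈ F.support, 2 * F k := by rw [Finsupp.sum, Finset.mul_sum]
    _ ≤ ∑ k ∈ F.support, (k * F k + g k) := Finset.sum_le_sum key
    _ = F.sum (fun k v => k * v) + ∑ k ∈ F.support, g k := by
        rw [Finset.sum_add_distrib]; rfl
    _ ≤ n * (m / 2) + m := add_le_add h2 (le_trans h3 h1)
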